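/- Let T be a tree of size m with bipartition (A, B), let m'_1, …, m'_a be the degrees of the non-leaf vertices of T lying in A, and let m_1, …, m_b be the degrees of the non-leaf vertices of T lying in B. Then at least one of the following holds: m − (m'_1 + ⋯ + m'_a) ≥ max{m'_1, …, m'_a} − 1, or m − (m_1 + ⋯ + m_b) ≥ max{m_1, …, m_b} − 1. -/

import Mathlib

open Finset

namespace Paper

variable {V E τ : Type*}

/-- Degree of vertex `v` in the edge subset `S` of a multigraph whose edges `e : E`
have endpoints `ends e : Sym2 V`. -/
noncomputable def mdeg (ends : E → Sym2 V) (S : Set E) (v : V) : ℕ :=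
  {e ∈ S | v ∈ ends e}.ncard

/-- The multigraph given by `ends` has no loops. -/
def Loopless (ends : E → Sym2 V) : Prop := ∀ e : E, ¬ (ends e).IsDiag

/-- Edges of `S` with (at least) one end inside `A` and one end outside `A`;
for loopless multigraphs these are the edges with exactly one end in `A`. -/
def crossEdges (ends : E → Sym2 V) (S : Set E) (A : Set V) : Set E :=
  {e ∈ S | (∃ x ∈ ends e, x ∈ A) ∧ ∃ y ∈ ends e, y ∉ A}

/-- The (spanning sub)multigraph with edge set `S` is `k`-edge-connected. -/
def MEdgeConnected (ends : E → Sym2 V) (S : Set E) (k : ℕ) : Prop :=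
  ∀ A : Set V, A.Nonempty → A ≠ Set.univ → k ≤ (crossEdges ends S A).ncard

/-- The simple graph on `V` underlying the edge subset `S`. -/
def toSimple (ends : E → Sym2 V) (S : Set E) : SimpleGraph V where
  Adj u v := u ≠ v ∧ ∃ e ∈ S, ends e = s(u, v)
  symm := by
    constructor
    rintro u v ⟨h, e, he, h2⟩
    exact ⟨h.symm, e, he, by rwa [Sym2.eq_swap]⟩
  loopless := by constructor; rintro v ⟨h, -⟩; exact h rfl

/-- The edge subset `S` forms a spanning tree of the multigraph given by `ends`. -/
def IsSpanningTree [Fintype V] (ends : E → Sym2 V) (S : Set E) : Prop :=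
  (toSimple ends S).Connected ∧ S.ncard = Fintype.card V - 1

/-- The (spanning sub)multigraph with edge set `S` contains `m` pairwise
edge-disjoint spanning trees. -/
def TreeConnected [Fintype V] (ends : E → Sym2 V) (S : Set E) (m : ℕ) : Prop :=
  ∃ Tr : Fin m → Set E, (∀ i, Tr i ⊆ S) ∧
    (Pairwise fun i j => Disjoint (Tr i) (Tr j)) ∧
    ∀ i, IsSpanningTree ends (Tr i)

/-- The edge subset `S` has an orientation (each edge `e ∈ S` gets a tail `o e`,
one of its endpoints) in which every vertex has out-degree at least `l`. -/
def HasOrientationOutdeg (ends : E → Sym2 V) (S : Set E) (l : ℕ) : Prop :=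
  ∃ o : E → V, (∀ e ∈ S, o e ∈ ends e) ∧ ∀ v : V, l ≤ {e ∈ S | o e = v}.ncard

/-- The (spanning sub)multigraph with edge set `S` is `(m, l)`-partition-connected. -/
def PartitionConnected [Fintype V] (ends : E → Sym2 V) (S : Set E) (m l : ℕ) : Prop :=
  ∃ Tm F : Set E, Disjoint Tm F ∧ Tm ∪ F = S ∧
    TreeConnected ends Tm m ∧ HasOrientationOutdeg ends F l

/-- `(X, Y)` is a bipartition of the multigraph given by `ends`. -/
def MBipartition (ends : E → Sym2 V) (X Y : Set V) : Prop :=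
  Disjoint X Y ∧ X ∪ Y = Set.univ ∧ ∀ e : E, ∃ x ∈ X, ∃ y ∈ Y, ends e = s(x, y)

open Classical in
/-- Sum of an integer-valued function over a set of vertices. -/
noncomputable def setSum [Fintype V] (A : Set V) (f : V → ℤ) : ℤ :=
  ∑ v ∈ Finset.univ.filter (· ∈ A), f v

/-! ### Simple graphs -/

/-- Degree of `v` in a simple graph. -/
noncomputable def sdeg (G : SimpleGraph V) (v : V) : ℕ := (G.neighborSet v).ncard

/-- A simple graph is `k`-edge-connected. -/
def SEdgeConnected (G : SimpleGraph V) (k : ℕ) : Prop :=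
  ∀ A : Set V, A.Nonempty → A ≠ Set.univ →
    k ≤ {e ∈ G.edgeSet | (∃ x ∈ e, x ∈ A) ∧ ∃ y ∈ e, y ∉ A}.ncard

/-- A simple graph is `(m, l)`-partition-connected. -/
def SPartitionConnected [Fintype V] (G : SimpleGraph V) (m l : ℕ) : Prop :=
  PartitionConnected (fun e : G.edgeSet => (e : Sym2 V)) Set.univ m l

/-- `A` is one of the two partite sets of (a bipartition of) `G`. -/
def BipartitionSide (G : SimpleGraph V) (A : Set V) : Prop :=
  ∀ a b, G.Adj a b → (a ∈ A ↔ b ∉ A)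

/-- `f` maps `T` onto a copy of `T` inside `G` (a subgraph isomorphic to `T`). -/
def IsCopy (T : SimpleGraph τ) (G : SimpleGraph V) (f : τ → V) : Prop :=
  Function.Injective f ∧ ∀ a b, T.Adj a b → G.Adj (f a) (f b)

/-- Edge set of the copy of `T` given by `f`. -/
def copyEdges (T : SimpleGraph τ) (f : τ → V) : Set (Sym2 V) := Sym2.map f '' T.edgeSet

/-- `G` admits a `T`-edge-decomposition: its edge set is partitioned into
edge sets of copies of `T`. -/
def HasTDecomposition (T : SimpleGraph τ) (G : SimpleGraph V) : Prop :=
  ∃ (n : ℕ) (f : Fin n → τ → V),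
    (∀ i, IsCopy T G (f i)) ∧
    (Pairwise fun i j => Disjoint (copyEdges T (f i)) (copyEdges T (f j))) ∧
    ⋃ i, copyEdges T (f i) = G.edgeSet

open Classical in
/-- The non-leaf vertices of `T` lying in `A`. -/
noncomputable def nonLeaf [Fintype τ] (T : SimpleGraph τ) (A : Set τ) : Finset τ :=
  Finset.univ.filter (fun v => v ∈ A ∧ 2 ≤ sdeg T v)

/-- The subgraph of `G` induced by `X`, viewed as a graph on the same vertex set. -/
def inducedOn (G : SimpleGraph V) (X : Set V) : SimpleGraph V where
  Adj u v := G.Adj u v ∧ u ∈ X ∧ v ∈ X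
  symm := by constructor; rintro u v ⟨h, hu, hv⟩; exact ⟨h.symm, hv, hu⟩
  loopless := by constructor; rintro v ⟨h, -⟩; exact G.ne_of_adj h rfl

/-!
Summing `d(v) - 2` over all vertices of a tree gives `-2`, so one side `X` of the bipartition has
`∑_{v ∈ X} (d(v) - 2) ≤ -1`. Every edge has exactly one end in `X`, so `m - ∑ m_i` is the number of
leaves in `X`, each contributing `-1` to that sum; hence `∑ (m_i - 2) ≤ (m - ∑ m_i) - 1`, and
`max m_i - 2 ≤ ∑ (m_i - 2)` because every term is nonnegative.
-/

lemma _root_.Finset.sup_sub_le_sum_sub {ι : Type*} (s : Finset ι) (f : ι → ℕ) {c : ℕ}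
    (hc : ∀ i ∈ s, c ≤ f i) :
    ((s.sup f : ℕ) : ℤ) - c ≤ ∑ i ∈ s, ((f i : ℤ) - c) := by
  rcases s.eq_empty_or_nonempty with rfl | hs
  · simp
  obtain ⟨i, hi, hsup⟩ := s.exists_mem_eq_sup hs f
  rw [hsup]
  exact single_le_sum (f := fun i => (f i : ℤ) - c) (fun j hj => by simp [hc j hj]) hi

lemma sdeg_eq_degree (G : SimpleGraph V) [Fintype V] [DecidableRel G.Adj] :
    sdeg G = fun v => G.degree v := by
  ext v
  rw [sdeg, Set.ncard_eq_toFinset_card', Set.toFinset_card,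
    SimpleGraph.card_neighborSet_eq_degree]

lemma mem_nonLeaf [Fintype V] {G : SimpleGraph V} [DecidableRel G.Adj] {X : Set V} {v : V} :
    v ∈ nonLeaf G X ↔ v ∈ X ∧ 2 ≤ G.degree v := by
  simp [nonLeaf, sdeg_eq_degree]

namespace BipartitionSide

variable {G : SimpleGraph V} {X : Set V}

lemma compl (hX : BipartitionSide G X) : BipartitionSide G Xᶜ := fun a b hab => by
  simpa using (hX a b hab).not

lemma isBipartiteWith (hX : BipartitionSide G X) : G.IsBipartiteWith X Xᶜ where
  disjoint := disjoint_compl_right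
  mem_of_adj a b hab := by
    by_cases ha : a ∈ X
    · exact Or.inl ⟨ha, (hX a b hab).mp ha⟩
    · exact Or.inr ⟨ha, not_not.mp (mt (hX a b hab).mpr ha)⟩

lemma sum_degree_eq_ncard_edgeSet [Fintype V] [DecidableRel G.Adj] [DecidablePred (· ∈ X)]
    (hX : BipartitionSide G X) :
    ∑ v ∈ univ.filter (· ∈ X), G.degree v = G.edgeSet.ncard := by
  rw [SimpleGraph.isBipartiteWith_sum_degrees_eq_card_edges (t := univ.filter (· ∉ X))
    (by simpa [Set.compl_def] using hX.isBipartiteWith),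
    Set.ncard_eq_toFinset_card', SimpleGraph.edgeFinset]

lemma sup_sub_one_le_of_sum_le [Fintype V] [DecidableRel G.Adj] [DecidablePred (· ∈ X)]
    (hX : BipartitionSide G X) (hdeg : ∀ v, 0 < G.degree v)
    (h : ∑ v ∈ univ.filter (· ∈ X), ((G.degree v : ℤ) - 2) ≤ -1) :
    (((nonLeaf G X).sup (sdeg G) : ℕ) : ℤ) - 1 ≤
      (G.edgeSet.ncard : ℤ) - ∑ v ∈ nonLeaf G X, (sdeg G v : ℤ) := by
  set s := univ.filter (· ∈ X)
  set L := s.filter (¬ 2 ≤ G.degree ·)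
  have hN : nonLeaf G X = s.filter (2 ≤ G.degree ·) := by
    ext v
    simp [s, mem_nonLeaf]
  have hleaf : ∀ v ∈ L, (G.degree v : ℤ) = 1 := fun v hv => by
    have := hdeg v
    simp only [L, mem_filter] at hv
    omega
  have hdegL : ∑ v ∈ L, (G.degree v : ℤ) = L.card := by
    simp [sum_congr rfl hleaf]
  have hdegL' : ∑ v ∈ L, ((G.degree v : ℤ) - 2) = -L.card := by
    simp [sum_congr rfl hleaf]
    ring
  have hhandshake : ∑ v ∈ s, (G.degree v : ℤ) = G.edgeSet.ncard := by
    exact_mod_cast hX.sum_degree_eq_ncard_edgeSet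
  have hsplit := sum_filter_add_sum_filter_not s (2 ≤ G.degree ·) fun v => (G.degree v : ℤ)
  have hsplit' := sum_filter_add_sum_filter_not s (2 ≤ G.degree ·) fun v => (G.degree v : ℤ) - 2
  have hmax := (nonLeaf G X).sup_sub_le_sum_sub (fun v => G.degree v)
    (c := 2) fun v hv => (mem_nonLeaf.mp hv).2
  rw [hN] at hmax
  rw [sdeg_eq_degree, hN]
  push_cast at hmax
  linarith

end BipartitionSide

lemma _root_.SimpleGraph.IsTree.sum_degree_sub_two [Fintype V] {G : SimpleGraph V}
    [DecidableRel G.Adj] (hG : G.IsTree) : ∑ v, ((G.degree v : ℤ) - 2) = -2 := by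
  have := hG.card_edgeFinset
  rw [sum_sub_distrib, ← Nat.cast_sum, G.sum_degrees_eq_twice_card_edges]
  simp only [sum_const, card_univ, nsmul_eq_mul]
  push_cast [← this]
  ring

/-- For a tree `T` of size `m` with bipartition `(A, Aᶜ)`, either
`m - ∑ m'_i ≥ max m'_i - 1` for the degrees `m'_i` of the non-leaf vertices in `A`, or
`m - ∑ m_i ≥ max m_i - 1` for the degrees `m_i` of the non-leaf vertices in `Aᶜ`. -/
theorem stmt6 {τ : Type*} [Fintype τ] (T : SimpleGraph τ) (hT : T.IsTree)
    (m : ℕ) (hsize : T.edgeSet.ncard = m)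
    (A : Set τ) (hA : BipartitionSide T A) :
    ((((nonLeaf T A).sup (sdeg T) : ℕ) : ℤ) - 1 ≤
        (m : ℤ) - ∑ v ∈ nonLeaf T A, (sdeg T v : ℤ)) ∨
    ((((nonLeaf T Aᶜ).sup (sdeg T) : ℕ) : ℤ) - 1 ≤
        (m : ℤ) - ∑ v ∈ nonLeaf T Aᶜ, (sdeg T v : ℤ)) := by
  classical
  subst hsize
  rcases subsingleton_or_nontrivial τ with hτ | hτ
  · left
    have hempty : nonLeaf T A = ∅ := by
      ext v
      simp [mem_nonLeaf]
    simp [hempty]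
  have hdeg v : 0 < T.degree v := hT.connected.preconnected.degree_pos_of_nontrivial v
  have hsides := hT.sum_degree_sub_two
  rw [← sum_filter_add_sum_filter_not _ (· ∈ A)] at hsides
  by_cases hle : ∑ v ∈ univ.filter (· ∈ A), ((T.degree v : ℤ) - 2) ≤ -1
  · exact Or.inl (hA.sup_sub_one_le_of_sum_le hdeg hle)
  · exact Or.inr (hA.compl.sup_sub_one_le_of_sum_le hdeg (by simp only [Set.mem_compl_iff]; omega))

end Paper
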